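/- The mode-merge operation ⊕ yields an upper bound with respect to subtyping: if T1 ⊕ T2 = T, then T1 <: T and T2 <: T; moreover the ownership-classification of T1 and T2 agrees with that of T (sameOwnership). -/
import Mathlib


inductive Mode : Type
  | owned | unowned | shared
  | states : Finset ℕ → Mode
  deriving DecidableEq

inductive ModeSub : Mode → Mode → Prop
  | refl (m : Mode) : ModeSub m m
  | statesSub {S S' : Finset ℕ} : S ⊆ S' → ModeSub (.states S) (.states S')
  | statesOwned (S : Finset ℕ) : ModeSub (.states S) .owned
  | ownedShared : ModeSub .owned .shared
  | ownedUnowned : ModeSub .owned .unowned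
  | toUnowned (m : Mode) : ModeSub m .unowned
  | trans {m1 m2 m3 : Mode} : ModeSub m1 m2 → ModeSub m2 m3 → ModeSub m1 m3

def maybeOwnedM : Mode → Prop
  | .owned => True
  | .states _ => True
  | _ => False

def sameOwnership (m m' : Mode) : Prop := maybeOwnedM m ↔ maybeOwnedM m'

/-- The (partial) mode merge operation `⊕`, as a relation. -/
inductive MergeM : Mode → Mode → Mode → Prop
  | refl (m : Mode) : MergeM m m m
  | ownedStates (S : Finset ℕ) : MergeM .owned (.states S) .owned
  | statesOwned (S : Finset ℕ) : MergeM (.states S) .owned .owned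
  | sharedUnowned : MergeM .shared .unowned .unowned
  | unownedShared : MergeM .unowned .shared .unowned
  | statesStates (S S' : Finset ℕ) : MergeM (.states S) (.states S') (.states (S ∪ S'))

theorem merge_upper_bound (m1 m2 m : Mode) (h : MergeM m1 m2 m) :
    ModeSub m1 m ∧ ModeSub m2 m ∧ sameOwnership m1 m ∧ sameOwnership m2 m := by
  cases h with
  | refl m' => exact ⟨.refl _, .refl _, Iff.rfl, Iff.rfl⟩
  | ownedStates S => exact ⟨.refl _, .statesOwned S, Iff.rfl, Iff.rfl⟩
  | statesOwned S => exact ⟨.statesOwned S, .refl _, Iff.rfl, Iff.rfl⟩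
  | sharedUnowned => exact ⟨.toUnowned _, .refl _, Iff.rfl, Iff.rfl⟩
  | unownedShared => exact ⟨.refl _, .toUnowned _, Iff.rfl, Iff.rfl⟩
  | statesStates S S' =>
    exact ⟨.statesSub (Finset.subset_union_left), .statesSub (Finset.subset_union_right), Iff.rfl, Iff.rfl⟩
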